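/- Minkowski sum ellipsoidal bound: for positive semidefinite matrices Q₁, Q₂ ∈ 𝕊₊^n, centers q₁, q₂ ∈ ℝⁿ, and any γ ∈ (0,1), the Minkowski sum E(q₁,Q₁) ⊕ E(q₂,Q₂) is contained in the ellipsoid E(q₁+q₂, (1/γ)Q₁ + (1/(1−γ))Q₂). -/

import Mathlib

open Matrix MeasureTheory

open scoped ComplexOrder in
/-- The square root of a positive semidefinite matrix, as defined in the older Mathlib
(`Matrix.PosSemidef.sqrt`, since removed). -/
noncomputable def Matrix.PosSemidef.sqrt {n 𝕜 : Type*} [Fintype n] [DecidableEq n] [RCLike 𝕜]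
    {A : Matrix n n 𝕜} (hA : A.PosSemidef) : Matrix n n 𝕜 :=
  (hA.1.eigenvectorUnitary : Matrix n n 𝕜) * diagonal ((↑) ∘ (√·) ∘ hA.1.eigenvalues) *
  (star hA.1.eigenvectorUnitary : Matrix n n 𝕜)

noncomputable def ellipsoid {m : ℕ} {Q : Matrix (Fin m) (Fin m) ℝ}
    (q : Fin m → ℝ) (hQ : Q.PosSemidef) : Set (Fin m → ℝ) :=
  {x | ∃ v : Fin m → ℝ, v ⬝ᵥ v ≤ 1 ∧ x = q + hQ.sqrt.mulVec v}

noncomputable def frob {p q : ℕ} (M : Matrix (Fin p) (Fin q) ℝ) : ℝ :=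
  Real.sqrt (Matrix.trace (Mᵀ * M))

/-!
Write `A = √Q₁`, `B = √Q₂`, `P = √S`; we must solve `P u = A v₁ + B v₂` with `‖u‖ ≤ 1` for
`‖v₁‖, ‖v₂‖ ≤ 1`. The weighted Cauchy–Schwarz inequality `(x + y)² ≤ x² / γ + y² / (1 - γ)` turns
`P Pᵀ = A Aᵀ / γ + B Bᵀ / (1 - γ)` into `‖Aᵀ y‖ + ‖Bᵀ y‖ ≤ ‖Pᵀ y‖` for all `y`: the support function
of the Minkowski sum is dominated by that of the large ellipsoid. This forces
`range A + range B ≤ range P = range (P Pᵀ)`, so `A v₁ + B v₂ = P Pᵀ y` for some `y`, and `u = Pᵀ y`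
satisfies `‖u‖² = ⟪Aᵀ y, v₁⟫ + ⟪Bᵀ y, v₂⟫ ≤ ‖Aᵀ y‖ + ‖Bᵀ y‖ ≤ ‖u‖`, whence `‖u‖ ≤ 1`.
-/

open scoped ComplexOrder

namespace Matrix.PosSemidef

variable {n 𝕜 : Type*} [Fintype n] [DecidableEq n] [RCLike 𝕜] {A : Matrix n n 𝕜}

theorem sqrt_isHermitian (hA : A.PosSemidef) : hA.sqrt.IsHermitian := by
  simp [IsHermitian, PosSemidef.sqrt, Matrix.mul_assoc, star_eq_conjTranspose, Function.comp_def,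
    Pi.star_def]

theorem sqrt_mul_self (hA : A.PosSemidef) : hA.sqrt * hA.sqrt = A := by
  conv_rhs => rw [hA.1.spectral_theorem, Unitary.conjStarAlgAut_apply]
  simp only [PosSemidef.sqrt, Matrix.mul_assoc]
  rw [← Matrix.mul_assoc (star _) _ (diagonal _ * _), Unitary.coe_star_mul_self, Matrix.one_mul,
    ← Matrix.mul_assoc (diagonal _) (diagonal _), diagonal_mul_diagonal]
  congr 3
  funext i
  simp [← RCLike.ofReal_mul, Real.mul_self_sqrt (hA.eigenvalues_nonneg i)]

theorem sqrt_mul_conjTranspose_sqrt (hA : A.PosSemidef) : hA.sqrt * hA.sqrtᴴ = A := by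
  rw [hA.sqrt_isHermitian.eq, hA.sqrt_mul_self]

end Matrix.PosSemidef

theorem add_sq_le_sq_div_add_sq_div {γ : ℝ} (hγ0 : 0 < γ) (hγ1 : γ < 1) (x y : ℝ) :
    (x + y) ^ 2 ≤ x ^ 2 / γ + y ^ 2 / (1 - γ) := by
  have hγ1' : 0 < 1 - γ := sub_pos.2 hγ1
  rw [div_add_div _ _ hγ0.ne' hγ1'.ne', le_div_iff₀ (mul_pos hγ0 hγ1')]
  nlinarith [sq_nonneg (x * (1 - γ) - y * γ)]

open LinearMap WithLp RealInnerProductSpace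

section InnerProductSpace

variable {E F G H : Type*}
  [NormedAddCommGroup E] [InnerProductSpace ℝ E] [FiniteDimensional ℝ E]
  [NormedAddCommGroup F] [InnerProductSpace ℝ F] [FiniteDimensional ℝ F]
  [NormedAddCommGroup G] [InnerProductSpace ℝ G] [FiniteDimensional ℝ G]
  [NormedAddCommGroup H] [InnerProductSpace ℝ H] [FiniteDimensional ℝ H]

theorem LinearMap.range_le_range_of_norm_adjoint_le {A : F →ₗ[ℝ] E} {P : G →ₗ[ℝ] E}
    (h : ∀ y, ‖A.adjoint y‖ ≤ ‖P.adjoint y‖) : range A ≤ range P := by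
  rw [← adjoint_adjoint A, ← adjoint_adjoint P, ← orthogonal_ker, ← orthogonal_ker]
  exact Submodule.orthogonal_le fun y hy ↦ by simpa [mem_ker.1 hy] using h y

theorem LinearMap.exists_norm_le_one_apply_eq_add {P : G →ₗ[ℝ] E} {A : F →ₗ[ℝ] E}
    {B : H →ₗ[ℝ] E} (h : ∀ y, ‖A.adjoint y‖ + ‖B.adjoint y‖ ≤ ‖P.adjoint y‖)
    {a : F} {b : H} (ha : ‖a‖ ≤ 1) (hb : ‖b‖ ≤ 1) : ∃ u, ‖u‖ ≤ 1 ∧ P u = A a + B b := by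
  have hA y : ‖A.adjoint y‖ ≤ ‖P.adjoint y‖ := (le_add_of_nonneg_right (norm_nonneg _)).trans (h y)
  have hB y : ‖B.adjoint y‖ ≤ ‖P.adjoint y‖ := (le_add_of_nonneg_left (norm_nonneg _)).trans (h y)
  have hmem : A a + B b ∈ range (P ∘ₗ P.adjoint) := by
    rw [range_self_comp_adjoint]
    exact add_mem (range_le_range_of_norm_adjoint_le hA ⟨a, rfl⟩)
      (range_le_range_of_norm_adjoint_le hB ⟨b, rfl⟩)
  obtain ⟨y, hy⟩ := hmem
  refine ⟨P.adjoint y, ?_, hy⟩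
  have hsq : ‖P.adjoint y‖ ^ 2 ≤ ‖P.adjoint y‖ := calc
    ‖P.adjoint y‖ ^ 2 = ⟪A.adjoint y, a⟫ + ⟪B.adjoint y, b⟫ := by
      rw [← real_inner_self_eq_norm_sq, adjoint_inner_left, ← comp_apply, hy, inner_add_right,
        adjoint_inner_left, adjoint_inner_left]
    _ ≤ ‖A.adjoint y‖ * ‖a‖ + ‖B.adjoint y‖ * ‖b‖ :=
      add_le_add (real_inner_le_norm _ _) (real_inner_le_norm _ _)
    _ ≤ ‖A.adjoint y‖ + ‖B.adjoint y‖ := by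
      gcongr <;> exact mul_le_of_le_one_right (norm_nonneg _) ‹_›
    _ ≤ ‖P.adjoint y‖ := h y
  nlinarith [norm_nonneg (P.adjoint y)]

end InnerProductSpace

theorem EuclideanSpace.norm_toLp_sq {ι : Type*} [Fintype ι] (v : ι → ℝ) :
    ‖toLp 2 v‖ ^ 2 = v ⬝ᵥ v := by
  rw [← real_inner_self_eq_norm_sq, EuclideanSpace.inner_toLp_toLp, star_trivial]

theorem Matrix.norm_toEuclideanLin_conjTranspose_sq {ι κ : Type*} [Fintype ι] [DecidableEq ι]
    [Fintype κ] (A : Matrix ι κ ℝ) (y : EuclideanSpace ℝ ι) :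
    ‖toEuclideanLin Aᴴ y‖ ^ 2 = ofLp y ⬝ᵥ (A * Aᴴ) *ᵥ ofLp y := by
  rw [← real_inner_self_eq_norm_sq, EuclideanSpace.inner_eq_star_dotProduct,
    conjTranspose_eq_transpose_of_trivial, ← mulVec_mulVec, dotProduct_mulVec, ← mulVec_transpose]
  simp

theorem Matrix.exists_mulVec_eq_add_of_mul_conjTranspose_eq {ι κ μ ν : Type*} [Fintype ι]
    [DecidableEq ι] [Fintype κ] [DecidableEq κ] [Fintype μ] [DecidableEq μ] [Fintype ν]
    [DecidableEq ν] {P : Matrix ι κ ℝ} {A : Matrix ι μ ℝ} {B : Matrix ι ν ℝ} {γ : ℝ}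
    (hγ0 : 0 < γ) (hγ1 : γ < 1) (h : P * Pᴴ = (1 / γ) • (A * Aᴴ) + (1 / (1 - γ)) • (B * Bᴴ))
    {v₁ : μ → ℝ} {v₂ : ν → ℝ} (hv₁ : v₁ ⬝ᵥ v₁ ≤ 1) (hv₂ : v₂ ⬝ᵥ v₂ ≤ 1) :
    ∃ u, u ⬝ᵥ u ≤ 1 ∧ P *ᵥ u = A *ᵥ v₁ + B *ᵥ v₂ := by
  have hnorm y : ‖(toEuclideanLin A).adjoint y‖ + ‖(toEuclideanLin B).adjoint y‖ ≤
      ‖(toEuclideanLin P).adjoint y‖ := by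
    simp only [← toEuclideanLin_conjTranspose_eq_adjoint]
    rw [← sq_le_sq₀ (by positivity) (norm_nonneg _)]
    refine (add_sq_le_sq_div_add_sq_div hγ0 hγ1 _ _).trans_eq ?_
    simp only [norm_toEuclideanLin_conjTranspose_sq, h, add_mulVec, smul_mulVec, dotProduct_add,
      dotProduct_smul, smul_eq_mul]
    ring
  obtain ⟨u, hu, hPu⟩ := exists_norm_le_one_apply_eq_add hnorm (a := toLp 2 v₁) (b := toLp 2 v₂)
    ((sq_le_one_iff₀ (norm_nonneg _)).1 (by rwa [EuclideanSpace.norm_toLp_sq]))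
    ((sq_le_one_iff₀ (norm_nonneg _)).1 (by rwa [EuclideanSpace.norm_toLp_sq]))
  refine ⟨ofLp u, ?_, by simpa using congrArg ofLp hPu⟩
  rw [← EuclideanSpace.norm_toLp_sq, toLp_ofLp]
  exact (sq_le_one_iff₀ (norm_nonneg _)).2 hu

theorem stmt4 {n : ℕ} (q₁ q₂ : Fin n → ℝ) {Q₁ Q₂ : Matrix (Fin n) (Fin n) ℝ}
    (hQ₁ : Q₁.PosSemidef) (hQ₂ : Q₂.PosSemidef) (γ : ℝ) (hγ0 : 0 < γ) (hγ1 : γ < 1)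
    (hS : ((1 / γ) • Q₁ + (1 / (1 - γ)) • Q₂).PosSemidef) :
    {x | ∃ a ∈ ellipsoid q₁ hQ₁, ∃ b ∈ ellipsoid q₂ hQ₂, x = a + b}
      ⊆ ellipsoid (q₁ + q₂) hS := by
  rintro _ ⟨_, ⟨v₁, hv₁, rfl⟩, _, ⟨v₂, hv₂, rfl⟩, rfl⟩
  obtain ⟨u, hu, hPu⟩ := exists_mulVec_eq_add_of_mul_conjTranspose_eq (A := hQ₁.sqrt)
    (B := hQ₂.sqrt) hγ0 hγ1 (by rw [hS.sqrt_mul_conjTranspose_sqrt, hQ₁.sqrt_mul_conjTranspose_sqrt,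
      hQ₂.sqrt_mul_conjTranspose_sqrt]) hv₁ hv₂
  exact ⟨u, hu, by rw [hPu]; abel⟩
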